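/- For every integer ω ≥ 2 there exists a finite sequence of closed intervals in ℝ, each of length exactly 1, whose clique number is at most ω, such that the algorithm KT(ω) applied to the associated interval graph presented vertex by vertex in the order of the sequence uses at least 3ω − 3 colors. -/
import Mathlib


/-- The interval graph determined by a finite sequence of closed intervals. -/
def intervalGraph {n : ℕ} (x : Fin n → ℝ × ℝ) : SimpleGraph (Fin n) :=
  SimpleGraph.fromRel
    (fun i j => (Set.Icc (x i).1 (x i).2 ∩ Set.Icc (x j).1 (x j).2).Nonempty)

/-- The clique number of the induced subgraph of `G` on the set `S` is at most `m`. -/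
def CliqueLE {n : ℕ} (G : SimpleGraph (Fin n)) (S : Set (Fin n)) (m : ℕ) : Prop :=
  ∀ T : Finset (Fin n), ↑T ⊆ S → G.IsClique (T : Set (Fin n)) → T.card ≤ m

/-- Levels of the Kierstead–Trotter algorithm `KT(ω)`, computed for the first `k`
presented vertices (`0` elsewhere).  Unfolding the recursive description of
`KT(ω)`, an incoming vertex `v` is handled at the smallest level `m < ω`
(`m ≥ 1`) such that adding `v` to the set of earlier vertices of level `≤ m`
keeps the clique number of the induced subgraph at most `m` (this set is the
`G`-part of the nested instance `KT(m+1)`, recursively colored by `KT(m)`);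
if no such `m < ω` exists, `v` is handled at level `ω` (the set `G'` of
`KT(ω)`, colored by First-Fit). -/
noncomputable def ktLevels (ω : ℕ) {n : ℕ} (G : SimpleGraph (Fin n)) : ℕ → Fin n → ℕ
  | 0 => fun _ => 0
  | k + 1 => fun v =>
      if v.1 = k then
        sInf {m : ℕ | m = ω ∨ (1 ≤ m ∧ m < ω ∧
          CliqueLE G ({u : Fin n | u < v ∧ ktLevels ω G k u ≤ m} ∪ {v}) m)}
      else ktLevels ω G k v

/-- The level at which the Kierstead–Trotter algorithm `KT(ω)` handles vertex `v`. -/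
noncomputable def ktLevel (ω : ℕ) {n : ℕ} (G : SimpleGraph (Fin n)) (v : Fin n) : ℕ :=
  ktLevels ω G (v.1 + 1) v

/-- The First-Fit color assigned within each level class (each level uses its
own disjoint palette of colors): computed for the first `k` vertices. -/
noncomputable def ktFFAux (ω : ℕ) {n : ℕ} (G : SimpleGraph (Fin n)) : ℕ → Fin n → ℕ
  | 0 => fun _ => 0
  | k + 1 => fun v =>
      if v.1 = k then
        sInf {c : ℕ | 1 ≤ c ∧ ∀ u : Fin n, u < v → G.Adj u v →
          ktLevel ω G u = ktLevel ω G v → ktFFAux ω G k u ≠ c}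
      else ktFFAux ω G k v

/-- The color assigned to vertex `v` by the Kierstead–Trotter algorithm `KT(ω)`:
a pair consisting of the level of `v` and the First-Fit color of `v` within its
level class; distinct levels thus receive disjoint sets of colors. -/
noncomputable def ktColor (ω : ℕ) {n : ℕ} (G : SimpleGraph (Fin n)) (v : Fin n) : ℕ × ℕ :=
  (ktLevel ω G v, ktFFAux ω G (v.1 + 1) v)


namespace KT3

lemma sInf_eq_of {S : Set ℕ} {m : ℕ} (hm : m ∈ S) (h : ∀ k < m, k ∉ S) :
    sInf S = m := by
  refine le_antisymm (Nat.sInf_le hm) ?_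
  by_contra h'
  push_neg at h'
  exact h _ h' (Nat.sInf_mem ⟨m, hm⟩)

lemma icc_inter_iff (A B : ℤ) :
    (Set.Icc ((A:ℝ)/10) ((A:ℝ)/10 + 1) ∩ Set.Icc ((B:ℝ)/10) ((B:ℝ)/10 + 1)).Nonempty
      ↔ |A - B| ≤ 10 := by
  constructor
  · rintro ⟨t, ⟨h1, h2⟩, ⟨h3, h4⟩⟩
    have hA : (A:ℝ) ≤ (B:ℝ) + 10 := by linarith
    have hB : (B:ℝ) ≤ (A:ℝ) + 10 := by linarith
    have hA' : A ≤ B + 10 := by exact_mod_cast hA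
    have hB' : B ≤ A + 10 := by exact_mod_cast hB
    rw [abs_le]; omega
  · intro h
    rw [abs_le] at h
    refine ⟨max ((A:ℝ)/10) ((B:ℝ)/10), ⟨le_max_left _ _, ?_⟩, ⟨le_max_right _ _, ?_⟩⟩
    · rw [max_le_iff]
      have h2 : B ≤ A + 10 := by omega
      have : (B:ℝ) ≤ A + 10 := by exact_mod_cast h2
      constructor <;> [linarith; linarith]
    · rw [max_le_iff]
      have h1 : A ≤ B + 10 := by omega
      have : (A:ℝ) ≤ B + 10 := by exact_mod_cast h1
      constructor <;> [linarith; linarith]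


/-! ### The construction -/

/-- number of vertices -/
def Nn (o : ℕ) : ℕ := (o - 1) * (o + 4)

/-- stage of index `v` -/
def sg (o v : ℕ) : ℕ := v / (o + 4)

/-- role index of `v` within its stage -/
def rl (o v : ℕ) : ℕ := v % (o + 4)

/-- base position (scaled by 10) of role `r` within a stage with stage index `s` -/
def base (o s r : ℕ) : ℤ :=
  if r = 0 then 0
  else if r ≤ s + 1 then 9
  else if r = s + 2 then 22
  else if r = s + 3 then 12
  else if r = s + 4 ∧ s + 2 < o then 11
  else 50 + 20 * r

/-- left endpoint (scaled by 10) of the interval of vertex `v` -/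
def Lf (o v : ℕ) : ℤ := (20 * o + 300) * (sg o v) + base o (sg o v) (rl o v)

/-- the sequence of intervals -/
noncomputable def xseq (o : ℕ) : Fin (Nn o) → ℝ × ℝ :=
  fun v => ((Lf o v.1 : ℝ) / 10, (Lf o v.1 : ℝ) / 10 + 1)

/-- the claimed level of vertex `v` -/
def lvl (o v : ℕ) : ℕ :=
  if 1 ≤ rl o v ∧ rl o v ≤ sg o v + 1 then sg o v + 2
  else if rl o v = sg o v + 3 then sg o v + 2
  else 1

/-- the claimed first-fit color of vertex `v` -/
def ffc (o v : ℕ) : ℕ :=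
  if 1 ≤ rl o v ∧ rl o v ≤ sg o v + 1 then rl o v
  else if rl o v = sg o v + 3 then sg o v + 2
  else 1

lemma rl_lt (o v : ℕ) : rl o v < o + 4 := Nat.mod_lt _ (by omega)

lemma sg_rl (o v : ℕ) : (o + 4) * sg o v + rl o v = v := Nat.div_add_mod v (o + 4)

lemma sg_lt {o : ℕ} (ho : 2 ≤ o) {v : ℕ} (hv : v < Nn o) : sg o v + 2 ≤ o := by
  have h : v / (o + 4) < o - 1 := by
    rw [Nat.div_lt_iff_lt_mul (by omega)]
    simpa [Nn, mul_comm] using hv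
  simp only [sg]; omega

/-- index of role `r` in stage `s` -/
def idx (o s r : ℕ) : ℕ := (o + 4) * s + r

lemma sg_idx {o s r : ℕ} (hr : r < o + 4) : sg o (idx o s r) = s := by
  rw [sg, idx, Nat.mul_add_div (by omega), Nat.div_eq_of_lt hr, Nat.add_zero]

lemma rl_idx {o s r : ℕ} (hr : r < o + 4) : rl o (idx o s r) = r := by
  rw [rl, idx, Nat.mul_add_mod, Nat.mod_eq_of_lt hr]

lemma idx_lt_Nn {o s r : ℕ} (hs : s + 2 ≤ o) (hr : r < o + 4) : idx o s r < Nn o := by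
  have : idx o s r < (o + 4) * (s + 1) := by rw [idx, Nat.mul_succ]; omega
  have h2 : (o + 4) * (s + 1) ≤ (o - 1) * (o + 4) := by
    rw [mul_comm ((o:ℕ) - 1)]
    exact Nat.mul_le_mul_left (o + 4) (by omega)
  simp only [Nn]; omega

/-- role case split -/
lemma base_split (o s r : ℕ) :
    (r = 0 ∧ base o s r = 0) ∨
    (1 ≤ r ∧ r ≤ s + 1 ∧ base o s r = 9) ∨
    (r = s + 2 ∧ base o s r = 22) ∨
    (r = s + 3 ∧ base o s r = 12) ∨
    (r = s + 4 ∧ s + 2 < o ∧ base o s r = 11) ∨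
    (s + 4 ≤ r ∧ base o s r = 50 + 20 * r) := by
  unfold base
  split_ifs with h1 h2 h3 h4 h5
  · left; exact ⟨h1, rfl⟩
  · right; left; exact ⟨by omega, h2, rfl⟩
  · right; right; left; exact ⟨h3, rfl⟩
  · right; right; right; left; exact ⟨h4, rfl⟩
  · right; right; right; right; left; exact ⟨h5.1, h5.2, rfl⟩
  · right; right; right; right; right
    constructor
    · push_neg at h5; omega
    · rfl

lemma base_nonneg (o s r : ℕ) : 0 ≤ base o s r := by
  rcases base_split o s r with ⟨_,h⟩|⟨_,_,h⟩|⟨_,h⟩|⟨_,h⟩|⟨_,_,h⟩|⟨_,h⟩ <;> rw [h] <;> positivity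

lemma base_le (o s r : ℕ) (hr : r < o + 4) : base o s r ≤ 20 * o + 110 := by
  rcases base_split o s r with ⟨_,h⟩|⟨_,_,h⟩|⟨_,h⟩|⟨_,h⟩|⟨_,_,h⟩|⟨_,h⟩ <;> rw [h] <;>
    [omega; omega; omega; omega; omega;
     (have : (r:ℤ) < (o:ℤ) + 4 := by exact_mod_cast hr
      omega)]

/-- two close vertices are in the same stage -/
lemma same_stage {o a b : ℕ} (ha : a < Nn o) (hb : b < Nn o)
    (h : |Lf o a - Lf o b| ≤ 10) : sg o a = sg o b := by
  by_contra hne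
  have h1 := base_nonneg o (sg o a) (rl o a)
  have h2 := base_nonneg o (sg o b) (rl o b)
  have h3 := base_le o (sg o a) (rl o a) (rl_lt o a)
  have h4 := base_le o (sg o b) (rl o b) (rl_lt o b)
  rw [abs_le] at h
  unfold Lf at h
  rcases Nat.lt_or_ge (sg o a) (sg o b) with hlt | hge
  · have : (sg o a : ℤ) + 1 ≤ sg o b := by exact_mod_cast hlt
    nlinarith [h.1, h.2]
  · have hlt : sg o b < sg o a := by omega
    have : (sg o b : ℤ) + 1 ≤ sg o a := by exact_mod_cast hlt
    nlinarith [h.1, h.2]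


/-- the graph of the construction -/
noncomputable abbrev Gg (o : ℕ) : SimpleGraph (Fin (Nn o)) := intervalGraph (xseq o)

lemma adj_iff {o : ℕ} (a b : Fin (Nn o)) :
    (Gg o).Adj a b ↔ a ≠ b ∧ |Lf o a.1 - Lf o b.1| ≤ 10 := by
  rw [Gg, intervalGraph, SimpleGraph.fromRel_adj]
  constructor
  · rintro ⟨hne, h | h⟩
    · exact ⟨hne, (icc_inter_iff _ _).1 h⟩
    · rw [Set.inter_comm] at h
      exact ⟨hne, (icc_inter_iff _ _).1 h⟩
  · rintro ⟨hne, h⟩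
    exact ⟨hne, Or.inl ((icc_inter_iff _ _).2 h)⟩

/-- combined role split -/
lemma role_split (o v : ℕ) :
    (rl o v = 0 ∧ base o (sg o v) (rl o v) = 0 ∧ lvl o v = 1 ∧ ffc o v = 1) ∨
    (1 ≤ rl o v ∧ rl o v ≤ sg o v + 1 ∧ base o (sg o v) (rl o v) = 9 ∧
      lvl o v = sg o v + 2 ∧ ffc o v = rl o v) ∨
    (rl o v = sg o v + 2 ∧ base o (sg o v) (rl o v) = 22 ∧ lvl o v = 1 ∧ ffc o v = 1) ∨
    (rl o v = sg o v + 3 ∧ base o (sg o v) (rl o v) = 12 ∧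
      lvl o v = sg o v + 2 ∧ ffc o v = sg o v + 2) ∨
    (rl o v = sg o v + 4 ∧ sg o v + 2 < o ∧ base o (sg o v) (rl o v) = 11 ∧
      lvl o v = 1 ∧ ffc o v = 1) ∨
    (sg o v + 4 ≤ rl o v ∧ base o (sg o v) (rl o v) = 50 + 20 * rl o v ∧
      lvl o v = 1 ∧ ffc o v = 1) := by
  rcases base_split o (sg o v) (rl o v) with h|h|h|h|h|h
  · exact Or.inl ⟨h.1, h.2, by rw [lvl, if_neg (by omega), if_neg (by omega)],
      by rw [ffc, if_neg (by omega), if_neg (by omega)]⟩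
  · exact Or.inr (Or.inl ⟨h.1, h.2.1, h.2.2, by rw [lvl, if_pos ⟨h.1, h.2.1⟩],
      by rw [ffc, if_pos ⟨h.1, h.2.1⟩]⟩)
  · exact Or.inr (Or.inr (Or.inl ⟨h.1, h.2, by rw [lvl, if_neg (by omega), if_neg (by omega)],
      by rw [ffc, if_neg (by omega), if_neg (by omega)]⟩))
  · exact Or.inr (Or.inr (Or.inr (Or.inl ⟨h.1, h.2, by rw [lvl, if_neg (by omega), if_pos h.1],
      by rw [ffc, if_neg (by omega), if_pos h.1]⟩)))
  · exact Or.inr (Or.inr (Or.inr (Or.inr (Or.inl ⟨h.1, h.2.1, h.2.2,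
      by rw [lvl, if_neg (by omega), if_neg (by omega)],
      by rw [ffc, if_neg (by omega), if_neg (by omega)]⟩))))
  · exact Or.inr (Or.inr (Or.inr (Or.inr (Or.inr ⟨h.1, h.2,
      by rw [lvl, if_neg (by omega), if_neg (by omega)],
      by rw [ffc, if_neg (by omega), if_neg (by omega)]⟩))))

lemma lvl_one_of_not (o v : ℕ) (h : ¬(1 ≤ rl o v ∧ rl o v ≤ sg o v + 1))
    (h2 : rl o v ≠ sg o v + 3) : lvl o v = 1 := by
  rw [lvl, if_neg h, if_neg h2]

/-- level-1 vertices are pairwise nonadjacent -/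
lemma indep_one {o : ℕ} {a b : Fin (Nn o)} (hla : lvl o a.1 = 1) (hlb : lvl o b.1 = 1)
    (hadj : (Gg o).Adj a b) : False := by
  rw [adj_iff] at hadj
  obtain ⟨hne, hcl⟩ := hadj
  have hst : sg o a.1 = sg o b.1 := same_stage a.2 b.2 hcl
  have hLa : Lf o a.1 = (20 * o + 300) * (sg o a.1) + base o (sg o a.1) (rl o a.1) := rfl
  have hLb : Lf o b.1 = (20 * o + 300) * (sg o b.1) + base o (sg o b.1) (rl o b.1) := rfl
  have hbase : |base o (sg o b.1) (rl o a.1) - base o (sg o b.1) (rl o b.1)| ≤ 10 := by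
    rw [hLa, hLb, hst] at hcl
    simpa using hcl
  have hrne : rl o a.1 ≠ rl o b.1 := by
    intro hr
    apply hne
    have e1 := sg_rl o a.1
    have e2 := sg_rl o b.1
    rw [hst, hr] at e1
    exact Fin.ext (by omega)
  rw [abs_le] at hbase
  rcases role_split o a.1 with ha|ha|ha|ha|ha|ha <;>
    rcases role_split o b.1 with hb|hb|hb|hb|hb|hb <;>
      rw [hst] at ha <;> omega


lemma base_close {o : ℕ} {a b : Fin (Nn o)} {s' : ℕ}
    (hcl : |Lf o a.1 - Lf o b.1| ≤ 10)
    (hsa : sg o a.1 = s') (hsb : sg o b.1 = s') :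
    |base o s' (rl o a.1) - base o s' (rl o b.1)| ≤ 10 := by
  have hLa : Lf o a.1 = (20 * o + 300) * (sg o a.1) + base o (sg o a.1) (rl o a.1) := rfl
  have hLb : Lf o b.1 = (20 * o + 300) * (sg o b.1) + base o (sg o b.1) (rl o b.1) := rfl
  rw [hLa, hLb, hsa, hsb] at hcl
  simpa using hcl

lemma val_eq_idx {o : ℕ} {a : Fin (Nn o)} {s' : ℕ} (h : sg o a.1 = s') :
    a.1 = idx o s' (rl o a.1) := by
  have := sg_rl o a.1
  rw [h] at this
  rw [idx]; omega

lemma card_le_of_rl_subset {o : ℕ} {T : Finset (Fin (Nn o))} {s' : ℕ}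
    (hst : ∀ a ∈ T, sg o a.1 = s') (R : Finset ℕ)
    (h : ∀ a ∈ T, rl o a.1 ∈ R) : T.card ≤ R.card := by
  refine Finset.card_le_card_of_injOn (fun a => rl o a.1) h ?_
  intro a ha b hb hr
  have e1 := val_eq_idx (hst a ha)
  have e2 := val_eq_idx (hst b hb)
  apply Fin.ext
  rw [e1, e2]
  exact congrArg (idx o s') hr

/-- structure of pairwise-close sets -/
lemma clique_struct {o : ℕ} (ho : 2 ≤ o) (T : Finset (Fin (Nn o)))
    (hcl : ∀ a ∈ T, ∀ b ∈ T, |Lf o a.1 - Lf o b.1| ≤ 10) (hT : T.Nonempty) :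
    ∃ s', s' + 2 ≤ o ∧ (∀ a ∈ T, sg o a.1 = s') ∧
      ((∃ d, T = {d}) ∨
       (∀ a ∈ T, rl o a.1 ≤ s' + 1) ∨
       (∀ a ∈ T, rl o a.1 = s' + 2 ∨ rl o a.1 = s' + 3) ∨
       (∀ a ∈ T, (1 ≤ rl o a.1 ∧ rl o a.1 ≤ s' + 1) ∨ rl o a.1 = s' + 3 ∨
          (rl o a.1 = s' + 4 ∧ s' + 2 < o))) := by
  obtain ⟨a₀, ha₀⟩ := hT
  set s' := sg o a₀.1 with hs'
  have hst : ∀ a ∈ T, sg o a.1 = s' := fun a ha => same_stage a.2 a₀.2 (hcl a ha a₀ ha₀)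
  refine ⟨s', sg_lt ho a₀.2, hst, ?_⟩
  by_cases hBig : ∃ d ∈ T, s' + 5 ≤ rl o d.1 ∨ (rl o d.1 = s' + 4 ∧ o ≤ s' + 2)
  · obtain ⟨d, hd, hbig⟩ := hBig
    left
    refine ⟨d, Finset.eq_singleton_iff_unique_mem.2 ⟨hd, fun a ha => ?_⟩⟩
    by_contra hne
    have hb := base_close (hcl a ha d hd) (hst a ha) (hst d hd)
    have hrne : rl o a.1 ≠ rl o d.1 := by
      intro hr
      exact hne (Fin.ext (by rw [val_eq_idx (hst a ha), val_eq_idx (hst d hd), hr]))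
    rw [abs_le] at hb
    rcases role_split o a.1 with h1|h1|h1|h1|h1|h1 <;>
      rcases role_split o d.1 with h2|h2|h2|h2|h2|h2 <;>
        rw [hst a ha] at h1 <;> rw [hst d hd] at h2 <;> omega
  · push_neg at hBig
    by_cases hA : ∃ a ∈ T, rl o a.1 = 0
    · obtain ⟨a₁, ha₁, hra₁⟩ := hA
      right; left
      intro b hb
      have hcb := base_close (hcl a₁ ha₁ b hb) (hst a₁ ha₁) (hst b hb)
      have hBd := hBig b hb
      rw [abs_le] at hcb
      rcases role_split o a₁.1 with h1|h1|h1|h1|h1|h1 <;>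
        rcases role_split o b.1 with h2|h2|h2|h2|h2|h2 <;>
          rw [hst a₁ ha₁] at h1 <;> rw [hst b hb] at h2 <;> omega
    · push_neg at hA
      by_cases hB : ∃ a ∈ T, rl o a.1 = s' + 2
      · obtain ⟨a₁, ha₁, hra₁⟩ := hB
        right; right; left
        intro b hb
        have hcb := base_close (hcl a₁ ha₁ b hb) (hst a₁ ha₁) (hst b hb)
        have hBd := hBig b hb
        have hAb := hA b hb
        rw [abs_le] at hcb
        rcases role_split o a₁.1 with h1|h1|h1|h1|h1|h1 <;>
          rcases role_split o b.1 with h2|h2|h2|h2|h2|h2 <;>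
            rw [hst a₁ ha₁] at h1 <;> rw [hst b hb] at h2 <;> omega
      · push_neg at hB
        right; right; right
        intro b hb
        have hBd := hBig b hb
        have hAb := hA b hb
        have hBb := hB b hb
        rcases role_split o b.1 with h2|h2|h2|h2|h2|h2 <;> rw [hst b hb] at h2 <;> omega

/-- global bound: any pairwise-close set has at most `o` elements -/
lemma card_le_global {o : ℕ} (ho : 2 ≤ o) (T : Finset (Fin (Nn o)))
    (hcl : ∀ a ∈ T, ∀ b ∈ T, |Lf o a.1 - Lf o b.1| ≤ 10) : T.card ≤ o := by
  rcases Finset.eq_empty_or_nonempty T with rfl | hT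
  · simp
  obtain ⟨s', hs', hst, hc⟩ := clique_struct ho T hcl hT
  rcases hc with ⟨d, rfl⟩ | h | h | h
  · simp; omega
  · have := card_le_of_rl_subset hst (Finset.range (s' + 2))
      (fun a ha => Finset.mem_range.2 (by have := h a ha; omega))
    rw [Finset.card_range] at this; omega
  · have := card_le_of_rl_subset hst {s' + 2, s' + 3}
      (fun a ha => by
        rcases h a ha with h' | h' <;> simp [h'])
    have h2 : ({s' + 2, s' + 3} : Finset ℕ).card ≤ 2 := Finset.card_le_two
    omega
  · by_cases hlt : s' + 2 < o
    · have := card_le_of_rl_subset hst (insert (s' + 3) (insert (s' + 4) (Finset.Icc 1 (s' + 1))))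
        (fun a ha => by
          rcases h a ha with h' | h' | h' <;> simp [Finset.mem_Icc] <;> omega)
      have h2 : (insert (s' + 3) (insert (s' + 4) (Finset.Icc 1 (s' + 1)))).card ≤ s' + 3 := by
        refine le_trans (Finset.card_insert_le _ _) ?_
        have := Finset.card_insert_le (s' + 4) (Finset.Icc 1 (s' + 1))
        rw [Nat.card_Icc] at this
        omega
      omega
    · have := card_le_of_rl_subset hst (insert (s' + 3) (Finset.Icc 1 (s' + 1)))
        (fun a ha => by
          rcases h a ha with h' | h' | h' <;> simp [Finset.mem_Icc] <;> omega)
      have h2 : (insert (s' + 3) (Finset.Icc 1 (s' + 1))).card ≤ s' + 2 := by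
        have := Finset.card_insert_le (s' + 3) (Finset.Icc 1 (s' + 1))
        rw [Nat.card_Icc] at this
        omega
      omega

/-- local bound: pairwise-close sets of vertices up to a wall/top of stage `s` -/
lemma card_le_local {o : ℕ} (ho : 2 ≤ o) (T : Finset (Fin (Nn o)))
    (hcl : ∀ a ∈ T, ∀ b ∈ T, |Lf o a.1 - Lf o b.1| ≤ 10)
    (s r : ℕ) (hr : r ≤ s + 3) (hrw : r < o + 4)
    (hub : ∀ a ∈ T, a.1 ≤ idx o s r) : T.card ≤ s + 2 := by
  rcases Finset.eq_empty_or_nonempty T with rfl | hT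
  · simp
  obtain ⟨s', hs', hst, hc⟩ := clique_struct ho T hcl hT
  have hs'le : s' ≤ s := by
    obtain ⟨a₀, ha₀⟩ := hT
    have h1 : a₀.1 / (o + 4) ≤ idx o s r / (o + 4) := Nat.div_le_div_right (hub a₀ ha₀)
    rw [show idx o s r / (o + 4) = sg o (idx o s r) from rfl, sg_idx hrw] at h1
    have : sg o a₀.1 = s' := hst a₀ ha₀
    rw [sg] at this; omega
  rcases hc with ⟨d, rfl⟩ | h | h | h
  · simp
  · have := card_le_of_rl_subset hst (Finset.range (s' + 2))
      (fun a ha => Finset.mem_range.2 (by have := h a ha; omega))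
    rw [Finset.card_range] at this; omega
  · have := card_le_of_rl_subset hst {s' + 2, s' + 3}
      (fun a ha => by rcases h a ha with h' | h' <;> simp [h'])
    have h2 : ({s' + 2, s' + 3} : Finset ℕ).card ≤ 2 := Finset.card_le_two
    omega
  · rcases Nat.lt_or_ge s' s with hlt | hge
    · have := card_le_of_rl_subset hst (insert (s' + 3) (insert (s' + 4) (Finset.Icc 1 (s' + 1))))
        (fun a ha => by
          rcases h a ha with h' | h' | h' <;> simp [Finset.mem_Icc] <;> omega)
      have h2 : (insert (s' + 3) (insert (s' + 4) (Finset.Icc 1 (s' + 1)))).card ≤ s' + 3 := by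
        refine le_trans (Finset.card_insert_le _ _) ?_
        have := Finset.card_insert_le (s' + 4) (Finset.Icc 1 (s' + 1))
        rw [Nat.card_Icc] at this
        omega
      omega
    · have hseq : s' = s := by omega
      subst hseq
      have hrl : ∀ a ∈ T, rl o a.1 ≤ r := by
        intro a ha
        have h1 := val_eq_idx (hst a ha)
        have h2 := hub a ha
        rw [h1] at h2
        simp only [idx] at h2
        omega
      have := card_le_of_rl_subset hst (insert (s' + 3) (Finset.Icc 1 (s' + 1)))
        (fun a ha => by
          have := hrl a ha
          rcases h a ha with h' | h' | h' <;> simp [Finset.mem_Icc] <;> omega)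
      have h2 : (insert (s' + 3) (Finset.Icc 1 (s' + 1))).card ≤ s' + 2 := by
        have := Finset.card_insert_le (s' + 3) (Finset.Icc 1 (s' + 1))
        rw [Nat.card_Icc] at this
        omega
      omega


/-! ### helper evals -/

lemma base_alpha (o s : ℕ) : base o s 0 = 0 := by simp [base]

lemma base_wall {o s r : ℕ} (h1 : 1 ≤ r) (h2 : r ≤ s + 1) : base o s r = 9 := by
  rw [base, if_neg (by omega), if_pos h2]

lemma base_beta (o s : ℕ) : base o s (s + 2) = 22 := by
  rw [base, if_neg (by omega), if_neg (by omega), if_pos rfl]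

lemma base_top (o s : ℕ) : base o s (s + 3) = 12 := by
  rw [base, if_neg (by omega), if_neg (by omega), if_neg (by omega), if_pos rfl]

lemma base_closer {o s : ℕ} (h : s + 2 < o) : base o s (s + 4) = 11 := by
  rw [base, if_neg (by omega), if_neg (by omega), if_neg (by omega), if_neg (by omega),
    if_pos ⟨rfl, h⟩]

lemma Lf_idx {o s r : ℕ} (hr : r < o + 4) :
    Lf o (idx o s r) = (20 * o + 300) * s + base o s r := by
  rw [Lf, sg_idx hr, rl_idx hr]

/-- the vertex of stage `s` and role `r` -/
def fidx (o s r : ℕ) (hs : s + 2 ≤ o) (hr : r < o + 4) : Fin (Nn o) :=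
  ⟨idx o s r, idx_lt_Nn hs hr⟩

lemma lvl_idx {o s r : ℕ} (hr : r < o + 4) :
    lvl o (idx o s r) =
      if 1 ≤ r ∧ r ≤ s + 1 then s + 2 else if r = s + 3 then s + 2 else 1 := by
  rw [lvl, rl_idx hr, sg_idx hr]

lemma ffc_idx {o s r : ℕ} (hr : r < o + 4) :
    ffc o (idx o s r) =
      if 1 ≤ r ∧ r ≤ s + 1 then r else if r = s + 3 then s + 2 else 1 := by
  rw [ffc, rl_idx hr, sg_idx hr]

lemma lvl_idx_wall {o s r : ℕ} (h1 : 1 ≤ r) (h2 : r ≤ s + 1) (hr : r < o + 4) :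
    lvl o (idx o s r) = s + 2 := by
  rw [lvl_idx hr, if_pos ⟨h1, h2⟩]

lemma ffc_idx_wall {o s r : ℕ} (h1 : 1 ≤ r) (h2 : r ≤ s + 1) (hr : r < o + 4) :
    ffc o (idx o s r) = r := by
  rw [ffc_idx hr, if_pos ⟨h1, h2⟩]

lemma lvl_idx_top {o s : ℕ} (hr : s + 3 < o + 4) : lvl o (idx o s (s + 3)) = s + 2 := by
  rw [lvl_idx hr, if_neg (by omega), if_pos rfl]

lemma ffc_idx_top {o s : ℕ} (hr : s + 3 < o + 4) : ffc o (idx o s (s + 3)) = s + 2 := by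
  rw [ffc_idx hr, if_neg (by omega), if_pos rfl]

lemma lvl_idx_alpha {o s : ℕ} (hr : (0:ℕ) < o + 4) : lvl o (idx o s 0) = 1 := by
  rw [lvl_idx hr, if_neg (by omega), if_neg (by omega)]

lemma ffc_idx_alpha {o s : ℕ} (hr : (0:ℕ) < o + 4) : ffc o (idx o s 0) = 1 := by
  rw [ffc_idx hr, if_neg (by omega), if_neg (by omega)]

/-- adjacency between two roles of the same stage -/
lemma adj_fidx {o s : ℕ} {r1 r2 : ℕ} (hs : s + 2 ≤ o) (h1 : r1 < o + 4) (h2 : r2 < o + 4)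
    (hne : r1 ≠ r2) (hb : |base o s r1 - base o s r2| ≤ 10) :
    (Gg o).Adj (fidx o s r1 hs h1) (fidx o s r2 hs h2) := by
  rw [adj_iff]
  constructor
  · intro h
    apply hne
    have : idx o s r1 = idx o s r2 := congrArg Fin.val h
    rw [idx, idx] at this
    omega
  · show |Lf o (idx o s r1) - Lf o (idx o s r2)| ≤ 10
    rw [Lf_idx h1, Lf_idx h2]
    simpa using hb

/-! ### stability lemmas -/

lemma ktLevels_stab (o : ℕ) {n : ℕ} (G : SimpleGraph (Fin n)) {k : ℕ} {v : Fin n}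
    (h : v.1 < k) : ktLevels o G k v = ktLevel o G v := by
  induction k with
  | zero => omega
  | succ k ih =>
    rcases Nat.lt_succ_iff_lt_or_eq.mp h with h' | h'
    · have hne : v.1 ≠ k := by omega
      show (if v.1 = k then _ else ktLevels o G k v) = _
      rw [if_neg hne]
      exact ih h'
    · rw [ktLevel, ← h']

lemma ktFFAux_stab (o : ℕ) {n : ℕ} (G : SimpleGraph (Fin n)) {k : ℕ} {v : Fin n}
    (h : v.1 < k) : ktFFAux o G k v = ktFFAux o G (v.1 + 1) v := by
  induction k with
  | zero => omega
  | succ k ih =>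
    rcases Nat.lt_succ_iff_lt_or_eq.mp h with h' | h'
    · have hne : v.1 ≠ k := by omega
      show (if v.1 = k then _ else ktFFAux o G k v) = _
      rw [if_neg hne]
      exact ih h'
    · rw [← h']


lemma close_of_clique {o : ℕ} {T : Finset (Fin (Nn o))} (h : (Gg o).IsClique (T : Set (Fin (Nn o)))) :
    ∀ a ∈ T, ∀ b ∈ T, |Lf o a.1 - Lf o b.1| ≤ 10 := by
  intro a ha b hb
  rcases eq_or_ne a b with rfl | hne
  · simp
  · exact ((adj_iff a b).1 (h (Finset.mem_coe.2 ha) (Finset.mem_coe.2 hb) hne)).2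

lemma lvl_ge_one (o u : ℕ) : 1 ≤ lvl o u := by
  rw [lvl]; split_ifs <;> omega

/-- acceptance: any clique among vertices up to a wall/top vertex `v` of its stage
has size at most `sg o v.1 + 2` -/
lemma cliqueLE_accept {o : ℕ} (ho : 2 ≤ o) (v : Fin (Nn o)) (hrv : rl o v.1 ≤ sg o v.1 + 3)
    (S : Set (Fin (Nn o))) (hS : ∀ u ∈ S, u ≤ v) :
    CliqueLE (Gg o) S (sg o v.1 + 2) := by
  intro T hsub hclq
  apply card_le_local ho T (close_of_clique hclq) (sg o v.1) (rl o v.1) hrv (rl_lt o v.1)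
  intro a ha
  rw [← val_eq_idx (rfl : sg o v.1 = sg o v.1)]
  exact hS a (hsub (Finset.mem_coe.2 ha))

/-- the break clique of stage `j - 2` kills acceptance at level `j` -/
lemma not_cliqueLE_break {o : ℕ} (ho : 2 ≤ o) (v : Fin (Nn o)) (j : ℕ)
    (h2 : 2 ≤ j) (hjo : j + 1 ≤ o) (hv : (o + 4) * (j - 1) ≤ v.1) :
    ¬ CliqueLE (Gg o) ({u : Fin (Nn o) | u < v ∧ lvl o u.1 ≤ j} ∪ {v}) j := by
  intro hCL
  set t := j - 2 with ht
  have htj : t + 2 = j := by omega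
  have hto : t + 2 < o := by omega
  have hRlt : ∀ r' ∈ insert (t + 3) (insert (t + 4) (Finset.Icc 1 (t + 1))), r' < o + 4 := by
    intro r' hr'
    simp only [Finset.mem_insert, Finset.mem_Icc] at hr'
    omega
  set R' : Finset ℕ := insert (t + 3) (insert (t + 4) (Finset.Icc 1 (t + 1))) with hR'
  have hmemNn : ∀ m ∈ R'.image (idx o t), m < Nn o := by
    intro m hm
    obtain ⟨r', hr', rfl⟩ := Finset.mem_image.1 hm
    exact idx_lt_Nn (by omega) (hRlt r' hr')
  set T : Finset (Fin (Nn o)) := (R'.image (idx o t)).attachFin hmemNn with hT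
  have hvalT : ∀ a ∈ T, ∃ r' ∈ R', a.1 = idx o t r' := by
    intro a ha
    rw [Finset.mem_attachFin] at ha
    obtain ⟨r', hr', he⟩ := Finset.mem_image.1 ha
    exact ⟨r', hr', he.symm⟩
  have hbase : ∀ r' ∈ R', base o t r' = 12 ∨ base o t r' = 11 ∨ base o t r' = 9 := by
    intro r' hr'
    simp only [hR', Finset.mem_insert, Finset.mem_Icc] at hr'
    rcases hr' with rfl | rfl | ⟨h1, h2⟩
    · exact Or.inl (base_top o t)
    · exact Or.inr (Or.inl (base_closer hto))
    · exact Or.inr (Or.inr (base_wall h1 h2))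
  have hlt_v : ∀ a ∈ T, a < v := by
    intro a ha
    obtain ⟨r', hr', he⟩ := hvalT a ha
    rw [Fin.lt_def, he]
    have h1 : idx o t r' < (o + 4) * (t + 1) := by
      rw [idx, Nat.mul_succ]
      have := hRlt r' hr'
      omega
    have h2 : (o + 4) * (t + 1) = (o + 4) * (j - 1) := by rw [show t + 1 = j - 1 by omega]
    omega
  have hsub : ↑T ⊆ ({u : Fin (Nn o) | u < v ∧ lvl o u.1 ≤ j} ∪ {v}) := by
    intro a ha
    rw [Finset.mem_coe] at ha
    left
    refine ⟨hlt_v a ha, ?_⟩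
    obtain ⟨r', hr', he⟩ := hvalT a ha
    rw [he, lvl_idx (hRlt r' hr')]
    simp only [hR', Finset.mem_insert, Finset.mem_Icc] at hr'
    rcases hr' with rfl | rfl | ⟨h1, h2⟩
    · rw [if_neg (by omega), if_pos rfl]; omega
    · rw [if_neg (by omega), if_neg (by omega)]; omega
    · rw [if_pos ⟨h1, h2⟩]; omega
  have hclq : (Gg o).IsClique (T : Set (Fin (Nn o))) := by
    intro a ha b hb hne
    rw [Finset.mem_coe] at ha hb
    obtain ⟨r1, hr1, he1⟩ := hvalT a ha
    obtain ⟨r2, hr2, he2⟩ := hvalT b hb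
    rw [adj_iff]
    refine ⟨hne, ?_⟩
    rw [he1, he2, Lf_idx (hRlt r1 hr1), Lf_idx (hRlt r2 hr2)]
    have hb1 := hbase r1 hr1
    have hb2 := hbase r2 hr2
    have : |base o t r1 - base o t r2| ≤ 10 := by rw [abs_le]; omega
    simpa using this
  have hcard : T.card = j + 1 := by
    rw [hT, Finset.card_attachFin, Finset.card_image_of_injOn
      (fun x _ y _ hxy => by rw [idx, idx] at hxy; omega)]
    rw [hR']
    rw [Finset.card_insert_of_notMem (by simp only [Finset.mem_insert, Finset.mem_Icc]; omega),
      Finset.card_insert_of_notMem (by simp only [Finset.mem_Icc]; omega), Nat.card_Icc]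
    omega
  have := hCL T hsub hclq
  omega


lemma level_is_one {o : ℕ} (ho : 2 ≤ o) (v : Fin (Nn o)) (hlvl1 : lvl o v.1 = 1) :
    sInf {m : ℕ | m = o ∨ (1 ≤ m ∧ m < o ∧
      CliqueLE (Gg o) ({u : Fin (Nn o) | u < v ∧ lvl o u.1 ≤ m} ∪ {v}) m)} = 1 := by
  apply sInf_eq_of
  · right
    refine ⟨le_refl 1, by omega, ?_⟩
    intro T hsub hclq
    rw [Finset.card_le_one]
    intro a ha b hb
    by_contra hne
    have hadj := hclq (Finset.mem_coe.2 ha) (Finset.mem_coe.2 hb) hne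
    have hla : lvl o a.1 = 1 := by
      rcases hsub (Finset.mem_coe.2 ha) with h | h
      · have := lvl_ge_one o a.1
        have := h.2
        omega
      · rw [Set.mem_singleton_iff] at h
        rw [h]; exact hlvl1
    have hlb : lvl o b.1 = 1 := by
      rcases hsub (Finset.mem_coe.2 hb) with h | h
      · have := lvl_ge_one o b.1
        have := h.2
        omega
      · rw [Set.mem_singleton_iff] at h
        rw [h]; exact hlvl1
    exact indep_one hla hlb hadj
  · intro c hc hmem
    rcases hmem with h | ⟨h1, _, _⟩ <;> omega

lemma level_is_m {o : ℕ} (ho : 2 ≤ o) (v : Fin (Nn o)) (ar : ℕ)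
    (har : ar < rl o v.1) (hrv : rl o v.1 ≤ sg o v.1 + 3)
    (hlvlar : lvl o (idx o (sg o v.1) ar) = 1)
    (hbar : |base o (sg o v.1) ar - base o (sg o v.1) (rl o v.1)| ≤ 10) :
    sInf {m : ℕ | m = o ∨ (1 ≤ m ∧ m < o ∧
      CliqueLE (Gg o) ({u : Fin (Nn o) | u < v ∧ lvl o u.1 ≤ m} ∪ {v}) m)}
      = sg o v.1 + 2 := by
  have hs2 : sg o v.1 + 2 ≤ o := sg_lt ho v.2
  have hr4 : rl o v.1 < o + 4 := rl_lt o v.1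
  have hvidx : v.1 = idx o (sg o v.1) (rl o v.1) := val_eq_idx rfl
  have hveq : v = fidx o (sg o v.1) (rl o v.1) hs2 hr4 := Fin.ext hvidx
  have hsgrl := sg_rl o v.1
  apply sInf_eq_of
  · rcases eq_or_lt_of_le hs2 with heq | hlt
    · left; exact heq
    · right
      refine ⟨by omega, hlt, ?_⟩
      apply cliqueLE_accept ho v hrv
      rintro u (hu | hu)
      · exact le_of_lt hu.1
      · rw [Set.mem_singleton_iff] at hu; rw [hu]
  · intro j hj hmem
    rcases hmem with rfl | ⟨hj1, hjo, hCL⟩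
    · omega
    rcases Nat.lt_or_ge j 2 with hj2 | hj2
    · -- j = 1 : the anchor of `v` rejects it
      have hj1' : j = 1 := by omega
      subst hj1'
      set a : Fin (Nn o) := fidx o (sg o v.1) ar hs2 (by omega) with ha
      have hav : a < v := by
        rw [Fin.lt_def]
        have hlt2 : idx o (sg o v.1) ar < idx o (sg o v.1) (rl o v.1) := by
          rw [idx, idx]; omega
        show idx o (sg o v.1) ar < v.1
        omega
      have hadj : (Gg o).Adj a v := by
        rw [hveq]
        exact adj_fidx hs2 (by omega) hr4 (by omega) hbar
      have hsub : ↑({a, v} : Finset (Fin (Nn o)))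
          ⊆ ({u : Fin (Nn o) | u < v ∧ lvl o u.1 ≤ 1} ∪ {v}) := by
        intro x hx
        simp only [Finset.coe_insert, Finset.coe_singleton, Set.mem_insert_iff,
          Set.mem_singleton_iff] at hx
        rcases hx with rfl | rfl
        · left
          exact ⟨hav, le_of_eq hlvlar⟩
        · right; rfl
      have hclq : (Gg o).IsClique (↑({a, v} : Finset (Fin (Nn o))) : Set (Fin (Nn o))) := by
        have : (↑({a, v} : Finset (Fin (Nn o))) : Set (Fin (Nn o))) = {a, v} := by simp
        rw [this]
        exact SimpleGraph.isClique_pair.2 (fun _ => hadj)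
      have := hCL {a, v} hsub hclq
      rw [Finset.card_pair (ne_of_lt hav)] at this
      omega
    · -- 2 ≤ j : the break clique of stage `j - 2` rejects it
      refine not_cliqueLE_break ho v j hj2 (by omega) ?_ hCL
      calc (o + 4) * (j - 1) ≤ (o + 4) * sg o v.1 :=
            Nat.mul_le_mul_left (o + 4) (by omega)
        _ ≤ v.1 := by omega


lemma ktLevel_unfold (o : ℕ) {n : ℕ} (G : SimpleGraph (Fin n)) (v : Fin n) :
    ktLevel o G v = sInf {m : ℕ | m = o ∨ (1 ≤ m ∧ m < o ∧
      CliqueLE G ({u : Fin n | u < v ∧ ktLevels o G v.1 u ≤ m} ∪ {v}) m)} := by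
  rw [ktLevel]
  show (if v.1 = v.1 then _ else ktLevels o G v.1 v) = _
  rw [if_pos rfl]

lemma ktFFAux_unfold (o : ℕ) {n : ℕ} (G : SimpleGraph (Fin n)) (v : Fin n) :
    ktFFAux o G (v.1 + 1) v = sInf {c : ℕ | 1 ≤ c ∧ ∀ u : Fin n, u < v → G.Adj u v →
      ktLevel o G u = ktLevel o G v → ktFFAux o G v.1 u ≠ c} := by
  show (if v.1 = v.1 then _ else ktFFAux o G v.1 v) = _
  rw [if_pos rfl]


theorem main {o : ℕ} (ho : 2 ≤ o) : ∀ v : Fin (Nn o),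
    ktLevel o (Gg o) v = lvl o v.1 ∧ ktFFAux o (Gg o) (v.1 + 1) v = ffc o v.1 := by
  have H : ∀ k : ℕ, ∀ v : Fin (Nn o), v.1 < k →
      ktLevel o (Gg o) v = lvl o v.1 ∧ ktFFAux o (Gg o) (v.1 + 1) v = ffc o v.1 := by
    intro k
    induction k with
    | zero => exact fun v hv => absurd hv (by omega)
    | succ k ih =>
      intro v hv
      rcases Nat.lt_succ_iff_lt_or_eq.mp hv with hlt | hk
      · exact ih v hlt
      have hs2 : sg o v.1 + 2 ≤ o := sg_lt ho v.2
      have hr4 : rl o v.1 < o + 4 := rl_lt o v.1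
      have hvidx : v.1 = idx o (sg o v.1) (rl o v.1) := val_eq_idx rfl
      have hveq : v = fidx o (sg o v.1) (rl o v.1) hs2 hr4 := Fin.ext hvidx
      have ihL : ∀ u : Fin (Nn o), u.1 < v.1 → ktLevel o (Gg o) u = lvl o u.1 :=
        fun u hu => (ih u (by omega)).1
      have ihF : ∀ u : Fin (Nn o), u.1 < v.1 → ktFFAux o (Gg o) (u.1 + 1) u = ffc o u.1 :=
        fun u hu => (ih u (by omega)).2
      have hprevL : ∀ u : Fin (Nn o), u.1 < v.1 → ktLevels o (Gg o) v.1 u = lvl o u.1 :=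
        fun u hu => (ktLevels_stab o _ hu).trans (ihL u hu)
      have hprevF : ∀ u : Fin (Nn o), u.1 < v.1 → ktFFAux o (Gg o) v.1 u = ffc o u.1 :=
        fun u hu => (ktFFAux_stab o _ hu).trans (ihF u hu)
      -- compute the level of `v`
      have hSet : ∀ m : ℕ, {u : Fin (Nn o) | u < v ∧ ktLevels o (Gg o) v.1 u ≤ m}
          = {u : Fin (Nn o) | u < v ∧ lvl o u.1 ≤ m} := by
        intro m
        ext u
        simp only [Set.mem_setOf_eq, and_congr_right_iff]
        intro hu
        rw [hprevL u (Fin.lt_def.mp hu)]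
      have hlev : ktLevel o (Gg o) v = lvl o v.1 := by
        rw [ktLevel_unfold]
        simp only [hSet]
        rcases role_split o v.1 with hrole | hrole | hrole | hrole | hrole | hrole
        · rw [hrole.2.2.1]
          exact level_is_one ho v hrole.2.2.1
        · rw [hrole.2.2.2.1]
          exact level_is_m ho v 0 (by omega) (by omega)
            (by rw [lvl_idx (by omega), if_neg (by omega), if_neg (by omega)])
            (by rw [base_alpha, hrole.2.2.1]; norm_num)
        · rw [hrole.2.2.1]
          exact level_is_one ho v hrole.2.2.1
        · rw [hrole.2.2.1]
          exact level_is_m ho v (sg o v.1 + 2) (by omega) (by omega)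
            (by rw [lvl_idx (by omega), if_neg (by omega), if_neg (by omega)])
            (by rw [base_beta, hrole.2.1]; norm_num)
        · rw [hrole.2.2.2.1]
          exact level_is_one ho v hrole.2.2.2.1
        · rw [hrole.2.2.1]
          exact level_is_one ho v hrole.2.2.1
      refine ⟨hlev, ?_⟩
      -- compute the first-fit color of `v`
      rw [ktFFAux_unfold]
      rcases role_split o v.1 with hrole | hrole | hrole | hrole | hrole | hrole
      -- case alpha
      · rw [hrole.2.2.2]
        apply sInf_eq_of
        · refine ⟨le_refl 1, fun u hu hadj hl => ?_⟩
          rw [ihL u (Fin.lt_def.mp hu), hlev, hrole.2.2.1] at hl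
          exact absurd hadj (fun h => indep_one hl hrole.2.2.1 h)
        · intro c hc hmem
          have := hmem.1; omega
      -- case wall
      · rw [hrole.2.2.2.2]
        apply sInf_eq_of
        · refine ⟨hrole.1, fun u hu hadj hl => ?_⟩
          have huv : u.1 < v.1 := Fin.lt_def.mp hu
          have hclose := ((adj_iff u v).1 hadj).2
          have hstu : sg o u.1 = sg o v.1 := same_stage u.2 v.2 hclose
          have hlvlu : lvl o u.1 = sg o v.1 + 2 := by
            rw [ihL u huv, hlev, hrole.2.2.2.1] at hl
            exact hl
          have hru : rl o u.1 < rl o v.1 := by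
            have e1 : u.1 = idx o (sg o v.1) (rl o u.1) := val_eq_idx hstu
            have e2 : idx o (sg o v.1) (rl o u.1) < idx o (sg o v.1) (rl o v.1) := by omega
            rw [idx, idx] at e2
            omega
          rw [hprevF u huv]
          rcases role_split o u.1 with h | h | h | h | h | h <;> rw [hstu] at h <;> omega
        · intro c hc hmem
          rcases Nat.eq_zero_or_pos c with rfl | hc1
          · exact absurd hmem.1 (by omega)
          have hcw : c ≤ sg o v.1 + 1 := by omega
          have hcr : c < o + 4 := by omega
          set u : Fin (Nn o) := fidx o (sg o v.1) c hs2 hcr with hu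
          have huv : u < v := by
            rw [Fin.lt_def]
            have hlt2 : idx o (sg o v.1) c < idx o (sg o v.1) (rl o v.1) := by
              rw [idx, idx]; omega
            show idx o (sg o v.1) c < v.1
            omega
          have hadj : (Gg o).Adj u v := by
            rw [hveq]
            exact adj_fidx hs2 hcr hr4 (by omega)
              (by rw [base_wall hc1 hcw, hrole.2.2.1]; norm_num)
          refine hmem.2 u huv hadj ?_ ?_
          · rw [ihL u (Fin.lt_def.mp huv), hlev, hrole.2.2.2.1]
            show lvl o (idx o (sg o v.1) c) = _
            rw [lvl_idx hcr, if_pos ⟨hc1, hcw⟩]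
          · rw [hprevF u (Fin.lt_def.mp huv)]
            show ffc o (idx o (sg o v.1) c) = c
            rw [ffc_idx hcr, if_pos ⟨hc1, hcw⟩]
      -- case beta
      · rw [hrole.2.2.2]
        apply sInf_eq_of
        · refine ⟨le_refl 1, fun u hu hadj hl => ?_⟩
          rw [ihL u (Fin.lt_def.mp hu), hlev, hrole.2.2.1] at hl
          exact absurd hadj (fun h => indep_one hl hrole.2.2.1 h)
        · intro c hc hmem
          have := hmem.1; omega
      -- case top
      · rw [hrole.2.2.2]
        apply sInf_eq_of
        · refine ⟨by omega, fun u hu hadj hl => ?_⟩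
          have huv : u.1 < v.1 := Fin.lt_def.mp hu
          have hclose := ((adj_iff u v).1 hadj).2
          have hstu : sg o u.1 = sg o v.1 := same_stage u.2 v.2 hclose
          have hlvlu : lvl o u.1 = sg o v.1 + 2 := by
            rw [ihL u huv, hlev, hrole.2.2.1] at hl
            exact hl
          have hru : rl o u.1 < rl o v.1 := by
            have e1 : u.1 = idx o (sg o v.1) (rl o u.1) := val_eq_idx hstu
            have e2 : idx o (sg o v.1) (rl o u.1) < idx o (sg o v.1) (rl o v.1) := by omega
            rw [idx, idx] at e2
            omega
          rw [hprevF u huv]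
          have hrv3 : rl o v.1 = sg o v.1 + 3 := hrole.1
          rcases role_split o u.1 with h | h | h | h | h | h <;> rw [hstu] at h <;> omega
        · intro c hc hmem
          rcases Nat.eq_zero_or_pos c with rfl | hc1
          · exact absurd hmem.1 (by omega)
          have hcw : c ≤ sg o v.1 + 1 := by omega
          have hcr : c < o + 4 := by omega
          set u : Fin (Nn o) := fidx o (sg o v.1) c hs2 hcr with hu
          have huv : u < v := by
            rw [Fin.lt_def]
            have hlt2 : idx o (sg o v.1) c < idx o (sg o v.1) (rl o v.1) := by
              rw [idx, idx]; omega
            show idx o (sg o v.1) c < v.1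
            omega
          have hadj : (Gg o).Adj u v := by
            rw [hveq]
            exact adj_fidx hs2 hcr hr4 (by omega)
              (by rw [base_wall hc1 hcw, hrole.2.1]; norm_num)
          refine hmem.2 u huv hadj ?_ ?_
          · rw [ihL u (Fin.lt_def.mp huv), hlev, hrole.2.2.1]
            show lvl o (idx o (sg o v.1) c) = _
            rw [lvl_idx hcr, if_pos ⟨hc1, hcw⟩]
          · rw [hprevF u (Fin.lt_def.mp huv)]
            show ffc o (idx o (sg o v.1) c) = c
            rw [ffc_idx hcr, if_pos ⟨hc1, hcw⟩]
      -- case closer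
      · rw [hrole.2.2.2.2]
        apply sInf_eq_of
        · refine ⟨le_refl 1, fun u hu hadj hl => ?_⟩
          rw [ihL u (Fin.lt_def.mp hu), hlev, hrole.2.2.2.1] at hl
          exact absurd hadj (fun h => indep_one hl hrole.2.2.2.1 h)
        · intro c hc hmem
          have := hmem.1; omega
      -- case dummy
      · rw [hrole.2.2.2]
        apply sInf_eq_of
        · refine ⟨le_refl 1, fun u hu hadj hl => ?_⟩
          rw [ihL u (Fin.lt_def.mp hu), hlev, hrole.2.2.1] at hl
          exact absurd hadj (fun h => indep_one hl hrole.2.2.1 h)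
        · intro c hc hmem
          have := hmem.1; omega
  exact fun v => H (v.1 + 1) v (Nat.lt_succ_self _)


lemma ktColor_eq {o : ℕ} (ho : 2 ≤ o) (v : Fin (Nn o)) :
    ktColor o (Gg o) v = (lvl o v.1, ffc o v.1) := by
  rw [ktColor, (main ho v).1, (main ho v).2]

theorem stmt3' (ω : ℕ) (hω : 2 ≤ ω) :
    ∃ (n : ℕ) (x : Fin n → ℝ × ℝ),
      (∀ i, (x i).2 - (x i).1 = 1) ∧
      (∀ t : ℝ, {i : Fin n | t ∈ Set.Icc (x i).1 (x i).2}.ncard ≤ ω) ∧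
      3 * ω - 3 ≤ (Set.range (ktColor ω (intervalGraph x))).ncard := by
  classical
  refine ⟨Nn ω, xseq ω, fun i => by simp [xseq], ?_, ?_⟩
  · -- coverage bound
    intro t
    have hset : {i : Fin (Nn ω) | t ∈ Set.Icc ((xseq ω) i).1 ((xseq ω) i).2}
        = ↑(Finset.univ.filter
            (fun i : Fin (Nn ω) => t ∈ Set.Icc ((xseq ω) i).1 ((xseq ω) i).2)) := by
      ext i; simp
    rw [hset, Set.ncard_coe_finset]
    apply card_le_global hω
    intro a ha b hb
    simp only [Finset.mem_filter] at ha hb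
    exact (icc_inter_iff _ _).1 ⟨t, ha.2, hb.2⟩
  · -- color count
    set Wfin : Finset (ℕ × ℕ) :=
      insert (1,1) (insert (2,1) (insert (2,2) ((Finset.Icc 3 ω) ×ˢ (Finset.Icc 1 3))))
      with hWfin
    have hsub : ↑Wfin ⊆ Set.range (ktColor ω (intervalGraph (xseq ω))) := by
      intro p hp
      rw [Finset.mem_coe] at hp
      simp only [hWfin, Finset.mem_insert, Finset.mem_product, Finset.mem_Icc] at hp
      have h04 : (0:ℕ) + 2 ≤ ω := by omega
      rcases hp with rfl | rfl | rfl | hp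
      · refine ⟨fidx ω 0 0 h04 (by omega), ?_⟩
        rw [ktColor_eq hω]
        show ((lvl ω (idx ω 0 0)), (ffc ω (idx ω 0 0))) = _
        rw [lvl_idx_alpha (by omega), ffc_idx_alpha (by omega)]
      · refine ⟨fidx ω 0 1 h04 (by omega), ?_⟩
        rw [ktColor_eq hω]
        show ((lvl ω (idx ω 0 1)), (ffc ω (idx ω 0 1))) = _
        rw [lvl_idx_wall (by omega) (by omega) (by omega), ffc_idx_wall (by omega) (by omega) (by omega)]
      · refine ⟨fidx ω 0 3 h04 (by omega), ?_⟩
        rw [ktColor_eq hω]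
        show ((lvl ω (idx ω 0 3)), (ffc ω (idx ω 0 3))) = _
        rw [show (3:ℕ) = 0 + 3 from rfl, lvl_idx_top (by omega), ffc_idx_top (by omega)]
      · -- p = (m, i) with 3 ≤ m ≤ ω, 1 ≤ i ≤ 3
        obtain ⟨⟨hm3, hmω⟩, hi1, hi3⟩ := hp
        set m := p.1
        set i := p.2
        set s := m - 2 with hs
        have hsω : s + 2 ≤ ω := by omega
        rcases le_or_gt i (s + 1) with hw | hw
        · refine ⟨fidx ω s i hsω (by omega), ?_⟩
          rw [ktColor_eq hω]
          show ((lvl ω (idx ω s i)), (ffc ω (idx ω s i))) = _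
          rw [lvl_idx_wall hi1 hw (by omega), ffc_idx_wall hi1 hw (by omega)]
          rw [Prod.ext_iff]
          exact ⟨show s + 2 = m by omega, rfl⟩
        · refine ⟨fidx ω s (s + 3) hsω (by omega), ?_⟩
          rw [ktColor_eq hω]
          show ((lvl ω (idx ω s (s + 3))), (ffc ω (idx ω s (s + 3)))) = _
          rw [lvl_idx_top (by omega), ffc_idx_top (by omega)]
          rw [Prod.ext_iff]
          exact ⟨show s + 2 = m by omega, show s + 2 = i by omega⟩
    have hcard : 3 * ω - 3 ≤ Wfin.card := by
      have hprod : ((Finset.Icc 3 ω) ×ˢ (Finset.Icc 1 3)).card = (ω - 2) * 3 := by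
        rw [Finset.card_product, Nat.card_Icc, Nat.card_Icc]
        have h9 : ω + 1 - 3 = ω - 2 := by omega
        rw [h9]
      have h1 : (2,2) ∉ (Finset.Icc 3 ω) ×ˢ (Finset.Icc 1 3) := by
        simp only [Finset.mem_product, Finset.mem_Icc]
        omega
      have h2 : (2,1) ∉ insert (2,2) ((Finset.Icc 3 ω) ×ˢ (Finset.Icc 1 3)) := by
        simp only [Finset.mem_insert, Finset.mem_product, Finset.mem_Icc, Prod.mk.injEq]
        omega
      have h3 : (1,1) ∉ insert (2,1) (insert (2,2) ((Finset.Icc 3 ω) ×ˢ (Finset.Icc 1 3))) := by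
        simp only [Finset.mem_insert, Finset.mem_product, Finset.mem_Icc, Prod.mk.injEq]
        omega
      rw [hWfin, Finset.card_insert_of_notMem h3, Finset.card_insert_of_notMem h2,
        Finset.card_insert_of_notMem h1, hprod]
      omega
    calc (3 * ω - 3 : ℕ) ≤ Wfin.card := hcard
      _ = (↑Wfin : Set (ℕ × ℕ)).ncard := (Set.ncard_coe_finset _).symm
      _ ≤ (Set.range (ktColor ω (intervalGraph (xseq ω)))).ncard :=
          Set.ncard_le_ncard hsub (Set.finite_range _)

end KT3

theorem stmt3 (ω : ℕ) (hω : 2 ≤ ω) :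
    ∃ (n : ℕ) (x : Fin n → ℝ × ℝ),
      (∀ i, (x i).2 - (x i).1 = 1) ∧
      (∀ t : ℝ, {i : Fin n | t ∈ Set.Icc (x i).1 (x i).2}.ncard ≤ ω) ∧
      3 * ω - 3 ≤ (Set.range (ktColor ω (intervalGraph x))).ncard := by
  exact KT3.stmt3' ω hω
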